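/- arXiv:2402.11556 — 3 statements merged into one kernel-verified Lean document; each statement's English description precedes it below -/
import Mathlib

section
/- Let K be a simplicial complex on [m] = {1,…,m} and let G_1,…,G_m be groups. Let P denote the quotient of the free product G_1 ∗ ⋯ ∗ G_m by the normal closure of all commutators g_i⁻¹g_j⁻¹g_ig_j with g_i ∈ G_i, g_j ∈ G_j and {i,j} an edge of K, and for each face I ∈ K let φ_I : ∏_{i∈I} G_i → P be the homomorphism sending an element (g_i)_{i∈I} to the product of the images of its coordinates under the canonical maps G_i → P. Then (P, (φ_I)_{I∈K}) is a colimit of the diagram over the face poset of K that assigns to a face I the group ∏_{i∈I} G_i and to an inclusion I ⊆ J the homomorphism ∏_{i∈I} G_i → ∏_{j∈J} G_j extending by identity elements; that is, for every group H and every family of homomorphisms ψ_I : ∏_{i∈I} G_i → H (I ∈ K) compatible with these inclusion maps, there exists a unique homomorphism h : P → H with h ∘ φ_I = ψ_I for all I ∈ K. -/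
/-!
Homomorphisms out of the graph product are families of homomorphisms `G i →* H` that commute
along the edges of `K`. Restricting a compatible family `ψ` to the singleton faces gives such a
family: compatibility with `{i} ⊆ I` shows that `ψ I` agrees with it on single-coordinate
elements, and on an edge `{i, j}` the two coordinate subgroups of `G i × G j` commute.
Uniqueness holds because the images of the `G i` generate the graph product.
-/

open Monoid

/-- The set of commutator relators `g_i⁻¹ g_j⁻¹ g_i g_j` for edges `{i,j}` of `K`. -/
def graphRels {m : ℕ} (K : Set (Finset (Fin m))) (G : Fin m → Type) [∀ i, Group (G i)] :
    Set (CoprodI G) :=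
  {x | ∃ (i j : Fin m) (gi : G i) (gj : G j), i ≠ j ∧ ({i, j} : Finset (Fin m)) ∈ K ∧
    x = (CoprodI.of gi)⁻¹ * (CoprodI.of gj)⁻¹ * CoprodI.of gi * CoprodI.of gj}

/-- The graph product of groups: the quotient of the free product by the normal closure
of the commutators corresponding to edges of `K`. -/
def GraphProduct {m : ℕ} (K : Set (Finset (Fin m))) (G : Fin m → Type) [∀ i, Group (G i)] :
    Type :=
  CoprodI G ⧸ Subgroup.normalClosure (graphRels K G)

instance {m : ℕ} (K : Set (Finset (Fin m))) (G : Fin m → Type) [∀ i, Group (G i)] :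
    Group (GraphProduct K G) :=
  inferInstanceAs (Group (CoprodI G ⧸ Subgroup.normalClosure (graphRels K G)))

/-- The canonical homomorphism `G i → GraphProduct K G`. -/
def graphInj {m : ℕ} (K : Set (Finset (Fin m))) (G : Fin m → Type) [∀ i, Group (G i)]
    (i : Fin m) : G i →* GraphProduct K G :=
  (QuotientGroup.mk' (Subgroup.normalClosure (graphRels K G))).comp CoprodI.of

/-- For `I ⊆ J`, the homomorphism `∏_{i∈I} G i → ∏_{j∈J} G j` extending by identity elements. -/
def extendHom {m : ℕ} (G : Fin m → Type) [∀ i, Group (G i)] {I J : Finset (Fin m)}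
    (h : I ⊆ J) : ((i : I) → G i) →* ((j : J) → G j) where
  toFun g j := if hj : j.val ∈ I then g ⟨j.val, hj⟩ else 1
  map_one' := by funext j; dsimp; split <;> rfl
  map_mul' x y := by funext j; dsimp; split <;> simp

lemma extendHom_mulSingle {m : ℕ} (G : Fin m → Type) [∀ i, Group (G i)]
    {I J : Finset (Fin m)} (h : I ⊆ J) (i : I) (g : G i.val) :
    extendHom G h (MonoidHom.mulSingle (fun j : I => G j.val) i g)
      = MonoidHom.mulSingle (fun j : J => G j.val) ⟨i.val, h i.2⟩ g := by
  classical
  funext ⟨j, hjJ⟩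
  obtain ⟨i, hiI⟩ := i
  by_cases hji : j = i
  · subst hji
    simp [extendHom, hiI]
  · have hne : ∀ (s : Finset (Fin m)) (hj : j ∈ s) (hi : i ∈ s),
        (⟨j, hj⟩ : s) ≠ ⟨i, hi⟩ := fun _ _ _ hc => hji (congrArg Subtype.val hc)
    simp only [extendHom, MonoidHom.coe_mk, OneHom.coe_mk, MonoidHom.mulSingle_apply,
      Pi.mulSingle_eq_of_ne (hne J _ _)]
    split
    · exact Pi.mulSingle_eq_of_ne (M := fun j : I => G j.val) (hne I _ _) g
    · rfl

namespace GraphProduct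

variable {m : ℕ} {K : Set (Finset (Fin m))} {G : Fin m → Type} [∀ i, Group (G i)]
  {H : Type} [Group H]

def EdgeCommute (K : Set (Finset (Fin m))) (k : ∀ i, G i →* H) : Prop :=
  ∀ i j, i ≠ j → ({i, j} : Finset (Fin m)) ∈ K → ∀ (gi : G i) (gj : G j),
    Commute (k i gi) (k j gj)

lemma normalClosure_graphRels_le_ker {k : ∀ i, G i →* H} (hk : EdgeCommute K k) :
    Subgroup.normalClosure (graphRels K G) ≤ (CoprodI.lift k).ker := by
  refine Subgroup.normalClosure_le_normal ?_
  rintro _ ⟨i, j, gi, gj, hij, hedge, rfl⟩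
  simp only [SetLike.mem_coe, MonoidHom.mem_ker, map_mul, map_inv, CoprodI.lift_of]
  rw [mul_assoc, (hk i j hij hedge gi gj).eq]
  group

def lift (k : ∀ i, G i →* H) (hk : EdgeCommute K k) : GraphProduct K G →* H :=
  QuotientGroup.lift _ (CoprodI.lift k) (normalClosure_graphRels_le_ker hk)

@[simp]
lemma lift_graphInj (k : ∀ i, G i →* H) (hk : EdgeCommute K k) (i : Fin m) (g : G i) :
    lift k hk (graphInj K G i g) = k i g :=
  CoprodI.lift_of k g

@[ext]
theorem hom_ext {f f' : GraphProduct K G →* H}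
    (h : ∀ i, f.comp (graphInj K G i) = f'.comp (graphInj K G i)) : f = f' :=
  QuotientGroup.monoidHom_ext _ (CoprodI.ext_hom _ _ h)

end GraphProduct

section FaceFamily

variable {m : ℕ} {K : Set (Finset (Fin m))} {G : Fin m → Type} [∀ i, Group (G i)]
  {H : Type} [Group H] (hsingle : ∀ i : Fin m, ({i} : Finset (Fin m)) ∈ K)
  (ψ : (I : Finset (Fin m)) → I ∈ K → (((i : I) → G i.val) →* H))

def vertexHom (i : Fin m) : G i →* H :=
  (ψ {i} (hsingle i)).comp
    (MonoidHom.mulSingle (fun j : ({i} : Finset (Fin m)) => G j.val)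
      ⟨i, Finset.mem_singleton_self i⟩)

variable {ψ}

lemma apply_mulSingle_eq_vertexHom
    (hψ : ∀ (I J : Finset (Fin m)) (hI : I ∈ K) (hJ : J ∈ K) (hIJ : I ⊆ J),
      (ψ J hJ).comp (extendHom G hIJ) = ψ I hI)
    (I : Finset (Fin m)) (hI : I ∈ K) (i : I) (g : G i.val) :
    ψ I hI (MonoidHom.mulSingle (fun j : I => G j.val) i g) = vertexHom hsingle ψ i.val g := by
  have hsub : ({i.val} : Finset (Fin m)) ⊆ I := Finset.singleton_subset_iff.mpr i.2
  rw [vertexHom, MonoidHom.comp_apply, ← hψ _ _ _ hI hsub, MonoidHom.comp_apply,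
    extendHom_mulSingle]

lemma vertexHom_edgeCommute
    (hψ : ∀ (I J : Finset (Fin m)) (hI : I ∈ K) (hJ : J ∈ K) (hIJ : I ⊆ J),
      (ψ J hJ).comp (extendHom G hIJ) = ψ I hI) :
    GraphProduct.EdgeCommute K (vertexHom hsingle ψ) := by
  intro i j hij hedge gi gj
  have hi : i ∈ ({i, j} : Finset (Fin m)) := by simp
  have hj : j ∈ ({i, j} : Finset (Fin m)) := by simp
  have hne : (⟨i, hi⟩ : ({i, j} : Finset (Fin m))) ≠ ⟨j, hj⟩ :=
    fun h => hij (congrArg Subtype.val h)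
  rw [← apply_mulSingle_eq_vertexHom hsingle hψ _ hedge ⟨i, hi⟩,
    ← apply_mulSingle_eq_vertexHom hsingle hψ _ hedge ⟨j, hj⟩]
  exact (Pi.mulSingle_commute hne gi gj).map (ψ {i, j} hedge)

end FaceFamily

theorem graphProduct_isColimit_general {m : ℕ} (K : Set (Finset (Fin m)))
    (hsingle : ∀ i : Fin m, ({i} : Finset (Fin m)) ∈ K)
    (G : Fin m → Type) [∀ i, Group (G i)]
    (φ : (I : Finset (Fin m)) → I ∈ K → (((i : I) → G i.val) →* GraphProduct K G))
    (hφ : ∀ (I : Finset (Fin m)) (hI : I ∈ K) (i : I) (g : G i.val),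
      φ I hI (MonoidHom.mulSingle (fun i : I => G i.val) i g) = graphInj K G i.val g)
    (H : Type) [Group H]
    (ψ : (I : Finset (Fin m)) → I ∈ K → (((i : I) → G i.val) →* H))
    (hψ : ∀ (I J : Finset (Fin m)) (hI : I ∈ K) (hJ : J ∈ K) (hIJ : I ⊆ J),
      (ψ J hJ).comp (extendHom G hIJ) = ψ I hI) :
    ∃! h : GraphProduct K G →* H,
      ∀ (I : Finset (Fin m)) (hI : I ∈ K), h.comp (φ I hI) = ψ I hI := by
  refine ⟨GraphProduct.lift _ (vertexHom_edgeCommute hsingle hψ), fun I hI => ?_, fun h hh => ?_⟩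
  · refine MonoidHom.pi_ext fun i g => ?_
    rw [MonoidHom.comp_apply, ← MonoidHom.mulSingle_apply, hφ, GraphProduct.lift_graphInj,
      apply_mulSingle_eq_vertexHom hsingle hψ]
  · ext i g
    have hvertex := DFunLike.congr_fun (hh {i} (hsingle i))
      (MonoidHom.mulSingle (fun j : ({i} : Finset (Fin m)) => G j.val)
        ⟨i, Finset.mem_singleton_self i⟩ g)
    rw [MonoidHom.comp_apply, hφ] at hvertex
    rw [MonoidHom.comp_apply, hvertex, MonoidHom.comp_apply, GraphProduct.lift_graphInj]
    rfl

/-- Let `K` be a simplicial complex on `[m]` and `G_1, …, G_m` groups.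
Let `P` be the graph product (the quotient of the free product by the normal closure of
the edge commutators), and for each face `I ∈ K` let `φ I : ∏_{i ∈ I} G i →* P` be the
homomorphism sending an element to the product of the images of its coordinates under the
canonical maps `G i → P` (equivalently, the homomorphism agreeing with the canonical maps
on single-coordinate elements).  Then `(P, φ)` is a colimit of the diagram over the face
poset of `K` assigning `I ↦ ∏_{i ∈ I} G i`, with structure maps extending by identity. -/
theorem graphProduct_isColimit {m : ℕ} (K : Set (Finset (Fin m)))
    (hdown : ∀ I ∈ K, ∀ J ⊆ I, J ∈ K) (hempty : ∅ ∈ K)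
    (hsingle : ∀ i : Fin m, ({i} : Finset (Fin m)) ∈ K)
    (G : Fin m → Type) [∀ i, Group (G i)]
    (φ : (I : Finset (Fin m)) → I ∈ K → (((i : I) → G i.val) →* GraphProduct K G))
    (hφ : ∀ (I : Finset (Fin m)) (hI : I ∈ K) (i : I) (g : G i.val),
      φ I hI (MonoidHom.mulSingle (fun i : I => G i.val) i g) = graphInj K G i.val g)
    (H : Type) [Group H]
    (ψ : (I : Finset (Fin m)) → I ∈ K → (((i : I) → G i.val) →* H))
    (hψ : ∀ (I J : Finset (Fin m)) (hI : I ∈ K) (hJ : J ∈ K) (hIJ : I ⊆ J),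
      (ψ J hJ).comp (extendHom G hIJ) = ψ I hI) :
    ∃! h : GraphProduct K G →* H,
      ∀ (I : Finset (Fin m)) (hI : I ∈ K), h.comp (φ I hI) = ψ I hI :=
  graphProduct_isColimit_general K hsingle G φ hφ H ψ hψ
end

section
/- Let R be a commutative ring with unit, I a set, rels a set of elements of the free group F(a_i : i ∈ I), and G = F(a_i : i ∈ I)/⟨⟨rels⟩⟩ the corresponding presented group. For a word w in the free group, let W(w) denote the monomial in the free associative R-algebra T_R(x_i, y_i : i ∈ I) obtained by replacing each letter a_i in the reduced form of w by x_i and each letter a_i⁻¹ by y_i. Then the group algebra R[G] is isomorphic, as an R-algebra, to the quotient of T_R(x_i, y_i : i ∈ I) by the two-sided ideal generated by the elements x_i y_i − 1 and y_i x_i − 1 for i ∈ I together with the elements W(r) − 1 for r ∈ rels, via the isomorphism sending the basis element of R[G] corresponding to the image of the generator a_i to the class of x_i. -/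
variable (R : Type) [CommRing R]

/-- The monomial `W(w)` in the free associative algebra on generators `x_i = inl i`,
`y_i = inr i` obtained by replacing, in the reduced word of `w`, each letter `a_i` by
`x_i` and each letter `a_i⁻¹` by `y_i`. -/
noncomputable def wordMonomial {I : Type} [DecidableEq I] (w : FreeGroup I) :
    FreeAlgebra R (I ⊕ I) :=
  ((FreeGroup.toWord w).map
    (fun p => if p.2 then FreeAlgebra.ι R (Sum.inl p.1) else FreeAlgebra.ι R (Sum.inr p.1))).prod

/-- The relation on the free algebra imposing `x_i y_i = 1`, `y_i x_i = 1`, and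
`W(r) = 1` for each relator `r ∈ rels`. -/
noncomputable def presRel {I : Type} [DecidableEq I] (rels : Set (FreeGroup I)) :
    FreeAlgebra R (I ⊕ I) → FreeAlgebra R (I ⊕ I) → Prop := fun a b =>
  (∃ i : I, a = FreeAlgebra.ι R (Sum.inl i) * FreeAlgebra.ι R (Sum.inr i) ∧ b = 1) ∨
  (∃ i : I, a = FreeAlgebra.ι R (Sum.inr i) * FreeAlgebra.ι R (Sum.inl i) ∧ b = 1) ∨
  (∃ r ∈ rels, a = wordMonomial R r ∧ b = 1)

/-!
The assignment `x_i ↦ a_i`, `y_i ↦ a_i⁻¹` defines an algebra map from the free algebra to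
`R[G]` sending each monomial `W(w)` to the image of `w`; it therefore kills all defining
relations and descends to the quotient. Conversely, the classes of `x_i` are units of the
quotient with inverses the classes of `y_i`, and the relation `W(r) = 1` says that the induced
homomorphism from the free group to these units kills every relator, so it factors through `G`
and extends linearly to `R[G]`. Both composites fix generators and are therefore the identity.
-/

section
variable {I : Type} {A : Type*} [Semiring A] [Algebra R A]

noncomputable def freeAlgebraLift (φ : FreeGroup I →* A) : FreeAlgebra R (I ⊕ I) →ₐ[R] A :=
  FreeAlgebra.lift R (Sum.elim (fun i => φ (.of i)) (fun i => φ (.of i)⁻¹))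

@[simp]
theorem freeAlgebraLift_ι_inl (φ : FreeGroup I →* A) (i : I) :
    freeAlgebraLift R φ (FreeAlgebra.ι R (Sum.inl i)) = φ (.of i) :=
  FreeAlgebra.lift_ι_apply _ _

@[simp]
theorem freeAlgebraLift_ι_inr (φ : FreeGroup I →* A) (i : I) :
    freeAlgebraLift R φ (FreeAlgebra.ι R (Sum.inr i)) = φ (.of i)⁻¹ :=
  FreeAlgebra.lift_ι_apply _ _

theorem AlgHom.comp_freeAlgebraLift {B : Type*} [Semiring B] [Algebra R B] (f : A →ₐ[R] B)
    (φ : FreeGroup I →* A) :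
    f.comp (freeAlgebraLift R φ) = freeAlgebraLift R ((f : A →* B).comp φ) :=
  FreeAlgebra.hom_ext <| funext fun i => by cases i <;> simp

variable [DecidableEq I]

theorem freeAlgebraLift_wordMonomial (φ : FreeGroup I →* A) (w : FreeGroup I) :
    freeAlgebraLift R φ (wordMonomial R w) = φ w := by
  have hφ : φ.toHomUnits = FreeGroup.lift fun i => φ.toHomUnits (.of i) :=
    FreeGroup.ext_hom _ _ fun i => FreeGroup.lift_apply_of.symm
  conv_rhs => rw [← FreeGroup.mk_toWord (x := w), ← MonoidHom.coe_toHomUnits, hφ,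
    FreeGroup.lift_mk]
  rw [wordMonomial, map_list_prod, ← Units.coeHom_apply, map_list_prod, List.map_map,
    List.map_map]
  congr 1
  refine List.map_congr_left fun ⟨i, b⟩ _ => ?_
  cases b <;> simp [← map_inv]

theorem freeAlgebraLift_presRel {rels : Set (FreeGroup I)} (φ : FreeGroup I →* A)
    (hφ : ∀ r ∈ rels, φ r = 1) ⦃a b : FreeAlgebra R (I ⊕ I)⦄ (h : presRel R rels a b) :
    freeAlgebraLift R φ a = freeAlgebraLift R φ b := by
  rcases h with ⟨i, rfl, rfl⟩ | ⟨i, rfl, rfl⟩ | ⟨r, hr, rfl, rfl⟩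
  · rw [map_mul, map_one, freeAlgebraLift_ι_inl, freeAlgebraLift_ι_inr, ← map_mul,
      mul_inv_cancel, map_one]
  · rw [map_mul, map_one, freeAlgebraLift_ι_inl, freeAlgebraLift_ι_inr, ← map_mul,
      inv_mul_cancel, map_one]
  · rw [freeAlgebraLift_wordMonomial, hφ r hr, map_one]

variable (rels : Set (FreeGroup I))

noncomputable def generatorUnit (i : I) : (RingQuot (presRel R rels))ˣ where
  val := RingQuot.mkAlgHom R (presRel R rels) (FreeAlgebra.ι R (Sum.inl i))
  inv := RingQuot.mkAlgHom R (presRel R rels) (FreeAlgebra.ι R (Sum.inr i))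
  val_inv := by
    rw [← map_mul, RingQuot.mkAlgHom_rel R (s := presRel R rels) (Or.inl ⟨i, rfl, rfl⟩),
      map_one]
  inv_val := by
    rw [← map_mul,
      RingQuot.mkAlgHom_rel R (s := presRel R rels) (Or.inr (Or.inl ⟨i, rfl, rfl⟩)), map_one]

theorem freeAlgebraLift_generatorUnit :
    freeAlgebraLift R ((Units.coeHom _).comp (FreeGroup.lift (generatorUnit R rels))) =
      RingQuot.mkAlgHom R (presRel R rels) :=
  FreeAlgebra.hom_ext <| funext fun i => by cases i <;> simp [generatorUnit]

theorem lift_generatorUnit_eq_one :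
    ∀ r ∈ rels, FreeGroup.lift (generatorUnit R rels) r = 1 := by
  intro r hr
  have hW := freeAlgebraLift_wordMonomial R
    ((Units.coeHom _).comp (FreeGroup.lift (generatorUnit R rels))) r
  rw [freeAlgebraLift_generatorUnit,
    RingQuot.mkAlgHom_rel R (s := presRel R rels) (Or.inr (Or.inr ⟨r, hr, rfl, rfl⟩)),
    map_one] at hW
  exact Units.ext hW.symm

noncomputable def toRingQuot :
    MonoidAlgebra R (PresentedGroup rels) →ₐ[R] RingQuot (presRel R rels) :=
  MonoidAlgebra.lift R _ _
    ((Units.coeHom _).comp (PresentedGroup.toGroup (lift_generatorUnit_eq_one R rels)))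

theorem toRingQuot_of_of (i : I) :
    toRingQuot R rels (MonoidAlgebra.of R (PresentedGroup rels) (PresentedGroup.of i)) =
      RingQuot.mkAlgHom R (presRel R rels) (FreeAlgebra.ι R (Sum.inl i)) := by
  simp [toRingQuot, generatorUnit]

theorem toRingQuot_comp_of_comp_mk :
    (toRingQuot R rels : _ →* _).comp
        ((MonoidAlgebra.of R _).comp (PresentedGroup.mk rels)) =
      (Units.coeHom _).comp (FreeGroup.lift (generatorUnit R rels)) :=
  FreeGroup.ext_hom _ _ fun i =>
    (toRingQuot_of_of R rels i).trans
      (congrArg Units.val (FreeGroup.lift_apply_of (f := generatorUnit R rels))).symm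

noncomputable def ofRingQuot :
    RingQuot (presRel R rels) →ₐ[R] MonoidAlgebra R (PresentedGroup rels) :=
  RingQuot.liftAlgHom R ⟨freeAlgebraLift R ((MonoidAlgebra.of R _).comp (PresentedGroup.mk rels)),
    freeAlgebraLift_presRel R _ fun r hr => by
      rw [MonoidHom.comp_apply, PresentedGroup.one_of_mem hr, map_one]⟩

theorem ofRingQuot_comp_mkAlgHom :
    (ofRingQuot R rels).comp (RingQuot.mkAlgHom R (presRel R rels)) =
      freeAlgebraLift R ((MonoidAlgebra.of R _).comp (PresentedGroup.mk rels)) :=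
  AlgHom.ext <| RingQuot.liftAlgHom_mkAlgHom_apply R _ _

theorem toRingQuot_comp_ofRingQuot : (toRingQuot R rels).comp (ofRingQuot R rels) =
    AlgHom.id R (RingQuot (presRel R rels)) := by
  ext1
  rw [AlgHom.comp_assoc, ofRingQuot_comp_mkAlgHom, AlgHom.comp_freeAlgebraLift,
    toRingQuot_comp_of_comp_mk, freeAlgebraLift_generatorUnit, AlgHom.id_comp]

theorem ofRingQuot_comp_toRingQuot : (ofRingQuot R rels).comp (toRingQuot R rels) =
    AlgHom.id R (MonoidAlgebra R (PresentedGroup rels)) := by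
  apply (MonoidAlgebra.lift R _ _).symm.injective
  refine (MonoidHom.cancel_right (PresentedGroup.mk_surjective rels)).1
    (FreeGroup.ext_hom _ _ fun i => ?_)
  change ofRingQuot R rels (toRingQuot R rels (MonoidAlgebra.of R _ (PresentedGroup.of i))) =
    MonoidAlgebra.of R _ (PresentedGroup.of i)
  rw [toRingQuot_of_of, ← AlgHom.comp_apply, ofRingQuot_comp_mkAlgHom, freeAlgebraLift_ι_inl]
  rfl

end

/-- For a presented group `G = F(a_i : i ∈ I)/⟨⟨rels⟩⟩`, the group
algebra `R[G]` is isomorphic, as an `R`-algebra, to the quotient of the free associative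
algebra `T_R(x_i, y_i : i ∈ I)` by the two-sided ideal generated by the elements
`x_i y_i − 1`, `y_i x_i − 1` (`i ∈ I`) and `W(r) − 1` (`r ∈ rels`), via the isomorphism
sending the basis element corresponding to the image of `a_i` to the class of `x_i`. -/
theorem monoidAlgebra_presentedGroup {I : Type} [DecidableEq I]
    (rels : Set (FreeGroup I)) :
    ∃ e : MonoidAlgebra R (PresentedGroup rels) ≃ₐ[R] RingQuot (presRel R rels),
      ∀ i : I, e (MonoidAlgebra.of R (PresentedGroup rels) (PresentedGroup.of i)) =
        RingQuot.mkAlgHom R (presRel R rels) (FreeAlgebra.ι R (Sum.inl i)) :=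
  ⟨.ofAlgHom _ _ (toRingQuot_comp_ofRingQuot R rels) (ofRingQuot_comp_toRingQuot R rels),
    toRingQuot_of_of R rels⟩
end

section
/- Let p be a prime, K a simplicial complex on [m], and ℤ_p^K the presented group with generators a_1,…,a_m and relations a_i^p = 1 for all i and a_i a_j = a_j a_i for every edge {i,j} ∈ K. Let A be the quotient of the free associative 𝔽_p-algebra T(u_1,…,u_m) by the two-sided ideal generated by the elements u_i^p for all i and u_i u_j − u_j u_i for all edges {i,j} ∈ K, and let ε′ : A → 𝔽_p be the algebra homomorphism determined by ε′(u_i) = 0 for all i. Then there is an 𝔽_p-algebra isomorphism Φ : A → 𝔽_p[ℤ_p^K] with Φ(u_i) = (basis element of a_i) − 1 for each i, and Φ intertwines the augmentations: ε ∘ Φ = ε′, where ε : 𝔽_p[ℤ_p^K] → 𝔽_p is the augmentation sending every group element to 1. -/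
/-- Relators of the graph product of cyclic groups of order `p`: `a_i^p = 1` and
`a_i a_j = a_j a_i` for edges `{i,j} ∈ K`. -/
def zpRels (p : ℕ) {m : ℕ} (K : Set (Finset (Fin m))) : Set (FreeGroup (Fin m)) :=
  {x | (∃ i : Fin m, x = FreeGroup.of i ^ p) ∨
    (∃ i j : Fin m, i ≠ j ∧ ({i, j} : Finset (Fin m)) ∈ K ∧
      x = FreeGroup.of i * FreeGroup.of j * (FreeGroup.of i)⁻¹ * (FreeGroup.of j)⁻¹)}

/-- The graph product `ℤ_p^K` of cyclic groups of order `p`. -/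
def ZpGraph (p : ℕ) {m : ℕ} (K : Set (Finset (Fin m))) : Type :=
  PresentedGroup (zpRels p K)

instance (p : ℕ) {m : ℕ} (K : Set (Finset (Fin m))) : Group (ZpGraph p K) :=
  inferInstanceAs (Group (PresentedGroup (zpRels p K)))

/-- The relation on the free associative `𝔽_p`-algebra imposing `u_i^p = 0` for all `i`
and `u_i u_j = u_j u_i` for all edges `{i,j} ∈ K`; its `RingQuot` is the quotient `A` of
the free algebra by the two-sided ideal generated by the `u_i^p` and
`u_i u_j − u_j u_i`. -/
def nilAlgRel (p : ℕ) {m : ℕ} (K : Set (Finset (Fin m))) :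
    FreeAlgebra (ZMod p) (Fin m) → FreeAlgebra (ZMod p) (Fin m) → Prop := fun a b =>
  (∃ i : Fin m, a = FreeAlgebra.ι (ZMod p) i ^ p ∧ b = 0) ∨
  (∃ i j : Fin m, i ≠ j ∧ ({i, j} : Finset (Fin m)) ∈ K ∧
    a = FreeAlgebra.ι (ZMod p) i * FreeAlgebra.ι (ZMod p) j ∧
    b = FreeAlgebra.ι (ZMod p) j * FreeAlgebra.ι (ZMod p) i)

/-- The augmentation `ε : 𝔽_p[G] → 𝔽_p`, the algebra homomorphism sending every group
element to `1`. -/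
noncomputable def augmentation (p : ℕ) (G : Type) [Group G] :
    MonoidAlgebra (ZMod p) G →ₐ[ZMod p] ZMod p :=
  MonoidAlgebra.lift (ZMod p) (ZMod p) G 1


/-! In `𝔽_p[ℤ_p^K]` the elements `a_i - 1` satisfy the defining relations of `A`: they commute
along edges, and `(a_i - 1)^p = a_i^p - 1 = 0` by the Frobenius identity in characteristic `p`.
Dually, in `A` the elements `1 + u_i` are units satisfying the relations of `ℤ_p^K`, since
`(1 + u_i)^p = 1 + u_i^p = 1`. The two universal properties give algebra maps
`u_i ↦ a_i - 1` and `a_i ↦ 1 + u_i`, which are mutually inverse because they are so on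
generators. -/

section CharP

variable {p : ℕ} [Fact p.Prime] {R : Type*} [Ring R] [Algebra (ZMod p) R]

theorem one_add_pow_char_eq_one {x : R} (hx : x ^ p = 0) : (1 + x) ^ p = 1 := by
  rcases subsingleton_or_nontrivial R with _ | _
  · exact Subsingleton.elim _ _
  · have := charP_of_injective_algebraMap (algebraMap (ZMod p) R).injective p
    rw [add_pow_char_of_commute p (Commute.one_left x), one_pow, hx, add_zero]

theorem sub_one_pow_char_eq_zero {x : R} (hx : x ^ p = 1) : (x - 1) ^ p = 0 := by
  rcases subsingleton_or_nontrivial R with _ | _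
  · exact Subsingleton.elim _ _
  · have := charP_of_injective_algebraMap (algebraMap (ZMod p) R).injective p
    rw [sub_pow_char_of_commute p (Commute.one_right x), one_pow, hx, sub_self]

end CharP

theorem PresentedGroup.monoidAlgebra_algHom_ext {α : Type*} {rels : Set (FreeGroup α)}
    {k B : Type*} [CommSemiring k] [Semiring B] [Algebra k B]
    {f g : MonoidAlgebra k (PresentedGroup rels) →ₐ[k] B}
    (h : ∀ x, f (MonoidAlgebra.of k _ (PresentedGroup.of x)) =
      g (MonoidAlgebra.of k _ (PresentedGroup.of x))) : f = g := by
  -- Group elements map to units, so `PresentedGroup.ext` applies to the unit-valued maps.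
  have hunits :
      ((f : MonoidAlgebra k (PresentedGroup rels) →* B).comp (MonoidAlgebra.of k _)).toHomUnits =
      ((g : MonoidAlgebra k (PresentedGroup rels) →* B).comp (MonoidAlgebra.of k _)).toHomUnits :=
    PresentedGroup.ext fun x => Units.ext (h x)
  exact MonoidAlgebra.algHom_ext (fun x => congr_arg Units.val (DFunLike.congr_fun hunits x))
    (Subsingleton.elim _ _)

namespace ZpGraph

variable {p m : ℕ} {K : Set (Finset (Fin m))}

-- Stated at type `ZpGraph p K`: `PresentedGroup.of i` has type `PresentedGroup (zpRels p K)`,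
-- which `rw` does not identify with `ZpGraph p K`.
def of (i : Fin m) : ZpGraph p K := PresentedGroup.of i

theorem of_pow_eq_one (i : Fin m) : (of i : ZpGraph p K) ^ p = 1 :=
  (map_pow (PresentedGroup.mk _) _ _).symm.trans (PresentedGroup.one_of_mem (Or.inl ⟨i, rfl⟩))

theorem commute_of {i j : Fin m} (hij : i ≠ j) (hK : ({i, j} : Finset (Fin m)) ∈ K) :
    Commute (of i : ZpGraph p K) (of j) := by
  have h := PresentedGroup.one_of_mem (rels := zpRels p K) (Or.inr ⟨i, j, hij, hK, rfl⟩)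
  simp only [map_mul, map_inv] at h
  exact commutatorElement_eq_one_iff_mul_comm.mp h

theorem monoidAlgebra_algHom_ext {k B : Type*} [CommSemiring k] [Semiring B] [Algebra k B]
    {f g : MonoidAlgebra k (ZpGraph p K) →ₐ[k] B}
    (h : ∀ i, f (MonoidAlgebra.of k (ZpGraph p K) (of i)) =
      g (MonoidAlgebra.of k (ZpGraph p K) (of i))) : f = g :=
  PresentedGroup.monoidAlgebra_algHom_ext h

variable {G : Type*} [Group G] (g : Fin m → G) (hpow : ∀ i, g i ^ p = 1)
  (hcomm : ∀ i j, i ≠ j → ({i, j} : Finset (Fin m)) ∈ K → Commute (g i) (g j))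

def lift : ZpGraph p K →* G :=
  PresentedGroup.toGroup (f := g) <| by
    rintro r (⟨i, rfl⟩ | ⟨i, j, hij, hK, rfl⟩)
    · rw [map_pow, FreeGroup.lift_apply_of, hpow]
    · simp only [map_mul, map_inv, FreeGroup.lift_apply_of, (hcomm i j hij hK).eq]
      group

theorem lift_of (i : Fin m) : lift g hpow hcomm (of i) = g i :=
  PresentedGroup.toGroup.of _

end ZpGraph

namespace NilAlg

variable {p m : ℕ} {K : Set (Finset (Fin m))}

def u (i : Fin m) : RingQuot (nilAlgRel p K) :=
  RingQuot.mkAlgHom (ZMod p) (nilAlgRel p K) (FreeAlgebra.ι (ZMod p) i)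

theorem u_pow (i : Fin m) : (u i : RingQuot (nilAlgRel p K)) ^ p = 0 := by
  rw [u, ← map_pow,
    RingQuot.mkAlgHom_rel (ZMod p) (s := nilAlgRel p K) (Or.inl ⟨i, rfl, rfl⟩), map_zero]

theorem commute_u {i j : Fin m} (hij : i ≠ j) (hK : ({i, j} : Finset (Fin m)) ∈ K) :
    Commute (u i : RingQuot (nilAlgRel p K)) (u j) := by
  rw [Commute, SemiconjBy, u, u, ← map_mul, ← map_mul,
    RingQuot.mkAlgHom_rel (ZMod p) (s := nilAlgRel p K) (Or.inr ⟨i, j, hij, hK, rfl, rfl⟩)]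

theorem algHom_ext {B : Type*} [Semiring B] [Algebra (ZMod p) B]
    {f g : RingQuot (nilAlgRel p K) →ₐ[ZMod p] B} (h : ∀ i, f (u i) = g (u i)) : f = g :=
  RingQuot.ringQuot_ext' _ _ _ (FreeAlgebra.hom_ext (funext h))

variable {B : Type*} [Semiring B] [Algebra (ZMod p) B] (f : Fin m → B) (hpow : ∀ i, f i ^ p = 0)
  (hcomm : ∀ i j, i ≠ j → ({i, j} : Finset (Fin m)) ∈ K → Commute (f i) (f j))

def lift : RingQuot (nilAlgRel p K) →ₐ[ZMod p] B :=
  RingQuot.liftAlgHom (ZMod p) ⟨FreeAlgebra.lift (ZMod p) f, by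
    rintro x y (⟨i, rfl, rfl⟩ | ⟨i, j, hij, hK, rfl, rfl⟩)
    · rw [map_pow, FreeAlgebra.lift_ι_apply, hpow, map_zero]
    · simp only [map_mul, FreeAlgebra.lift_ι_apply, (hcomm i j hij hK).eq]⟩

theorem lift_u (i : Fin m) : lift f hpow hcomm (u i : RingQuot (nilAlgRel p K)) = f i := by
  rw [lift, u, RingQuot.liftAlgHom_mkAlgHom_apply, FreeAlgebra.lift_ι_apply]

noncomputable def oneAddU (i : Fin m) : (RingQuot (nilAlgRel p K))ˣ :=
  (IsNilpotent.isUnit_one_add ⟨p, u_pow i⟩).unit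

theorem val_oneAddU (i : Fin m) :
    ((oneAddU i : (RingQuot (nilAlgRel p K))ˣ) : RingQuot (nilAlgRel p K)) = 1 + u i :=
  IsUnit.unit_spec _

end NilAlg

section GroupAlgebra

variable {p m : ℕ} {K : Set (Finset (Fin m))} [Fact p.Prime]

noncomputable def nilAlgToGroupAlgebra :
    RingQuot (nilAlgRel p K) →ₐ[ZMod p] MonoidAlgebra (ZMod p) (ZpGraph p K) :=
  NilAlg.lift (fun i => MonoidAlgebra.of (ZMod p) (ZpGraph p K) (ZpGraph.of i) - 1)
    (fun i => sub_one_pow_char_eq_zero <| by rw [← map_pow, ZpGraph.of_pow_eq_one, map_one])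
    (fun _ _ hij hK => (((ZpGraph.commute_of hij hK).map _).sub_right
      (Commute.one_right _)).sub_left (Commute.one_left _))

theorem nilAlgToGroupAlgebra_u (i : Fin m) :
    nilAlgToGroupAlgebra (NilAlg.u i : RingQuot (nilAlgRel p K)) =
      MonoidAlgebra.of (ZMod p) (ZpGraph p K) (ZpGraph.of i) - 1 :=
  NilAlg.lift_u _ _ _ i

noncomputable def groupAlgebraToNilAlg :
    MonoidAlgebra (ZMod p) (ZpGraph p K) →ₐ[ZMod p] RingQuot (nilAlgRel p K) :=
  MonoidAlgebra.lift (ZMod p) _ _ <| (Units.coeHom _).comp <|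
    ZpGraph.lift NilAlg.oneAddU
      (fun i => Units.ext <| by
        rw [Units.val_pow_eq_pow_val, NilAlg.val_oneAddU, Units.val_one,
          one_add_pow_char_eq_one (NilAlg.u_pow i)])
      (fun _ _ hij hK => Commute.units_of_val <| by
        rw [NilAlg.val_oneAddU, NilAlg.val_oneAddU]
        exact (Commute.one_left _).add_left
          ((Commute.one_right _).add_right (NilAlg.commute_u hij hK)))

theorem groupAlgebraToNilAlg_of (i : Fin m) :
    groupAlgebraToNilAlg (MonoidAlgebra.of (ZMod p) (ZpGraph p K) (ZpGraph.of i)) =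
      1 + NilAlg.u i := by
  rw [groupAlgebraToNilAlg, MonoidAlgebra.lift_of, MonoidHom.comp_apply, ZpGraph.lift_of,
    Units.coeHom_apply, NilAlg.val_oneAddU]

noncomputable def nilAlgEquivGroupAlgebra :
    RingQuot (nilAlgRel p K) ≃ₐ[ZMod p] MonoidAlgebra (ZMod p) (ZpGraph p K) :=
  AlgEquiv.ofAlgHom nilAlgToGroupAlgebra groupAlgebraToNilAlg
    (ZpGraph.monoidAlgebra_algHom_ext fun i => by
      rw [AlgHom.comp_apply, groupAlgebraToNilAlg_of, map_add, map_one, nilAlgToGroupAlgebra_u,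
        add_sub_cancel, AlgHom.id_apply])
    (NilAlg.algHom_ext fun i => by
      rw [AlgHom.comp_apply, nilAlgToGroupAlgebra_u, map_sub, map_one, groupAlgebraToNilAlg_of,
        add_sub_cancel_left, AlgHom.id_apply])

theorem nilAlgEquivGroupAlgebra_u (i : Fin m) :
    nilAlgEquivGroupAlgebra (NilAlg.u i : RingQuot (nilAlgRel p K)) =
      MonoidAlgebra.of (ZMod p) (ZpGraph p K) (ZpGraph.of i) - 1 :=
  nilAlgToGroupAlgebra_u i

end GroupAlgebra

theorem augmentation_of (p : ℕ) (G : Type) [Group G] (g : G) :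
    augmentation p G (MonoidAlgebra.of (ZMod p) G g) = 1 :=
  MonoidAlgebra.lift_of _ _

theorem nilAlg_iso_groupAlgebra_general (p : ℕ) (hp : p.Prime) {m : ℕ}
    (K : Set (Finset (Fin m)))
    (ε' : RingQuot (nilAlgRel p K) →ₐ[ZMod p] ZMod p)
    (hε' : ∀ i : Fin m, ε' (RingQuot.mkAlgHom (ZMod p) (nilAlgRel p K)
      (FreeAlgebra.ι (ZMod p) i)) = 0) :
    ∃ Φ : RingQuot (nilAlgRel p K) ≃ₐ[ZMod p] MonoidAlgebra (ZMod p) (ZpGraph p K),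
      (∀ i : Fin m, Φ (RingQuot.mkAlgHom (ZMod p) (nilAlgRel p K)
          (FreeAlgebra.ι (ZMod p) i)) =
        MonoidAlgebra.of (ZMod p) (ZpGraph p K) (PresentedGroup.of i) - 1) ∧
      (augmentation p (ZpGraph p K)).comp Φ.toAlgHom = ε' := by
  have : Fact p.Prime := ⟨hp⟩
  refine ⟨nilAlgEquivGroupAlgebra, nilAlgEquivGroupAlgebra_u, NilAlg.algHom_ext fun i => ?_⟩
  rw [AlgHom.comp_apply, AlgEquiv.toAlgHom_apply, nilAlgEquivGroupAlgebra_u, map_sub, map_one,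
    augmentation_of, sub_self]
  exact (hε' i).symm

/-- Let `A = T(u_1,…,u_m)/(u_i^p, u_iu_j − u_ju_i for {i,j} ∈ K)` with
augmentation `ε′` determined by `ε′(u_i) = 0`.  Then there is an `𝔽_p`-algebra
isomorphism `Φ : A → 𝔽_p[ℤ_p^K]` with `Φ(u_i) = a_i − 1`, and `Φ` intertwines the
augmentations: `ε ∘ Φ = ε′`. -/
theorem nilAlg_iso_groupAlgebra (p : ℕ) (hp : p.Prime) {m : ℕ}
    (K : Set (Finset (Fin m)))
    (hdown : ∀ I ∈ K, ∀ J ⊆ I, J ∈ K) (hempty : ∅ ∈ K)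
    (hsingle : ∀ i : Fin m, ({i} : Finset (Fin m)) ∈ K)
    (ε' : RingQuot (nilAlgRel p K) →ₐ[ZMod p] ZMod p)
    (hε' : ∀ i : Fin m, ε' (RingQuot.mkAlgHom (ZMod p) (nilAlgRel p K)
      (FreeAlgebra.ι (ZMod p) i)) = 0) :
    ∃ Φ : RingQuot (nilAlgRel p K) ≃ₐ[ZMod p] MonoidAlgebra (ZMod p) (ZpGraph p K),
      (∀ i : Fin m, Φ (RingQuot.mkAlgHom (ZMod p) (nilAlgRel p K)
          (FreeAlgebra.ι (ZMod p) i)) =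
        MonoidAlgebra.of (ZMod p) (ZpGraph p K) (PresentedGroup.of i) - 1) ∧
      (augmentation p (ZpGraph p K)).comp Φ.toAlgHom = ε' :=
  nilAlg_iso_groupAlgebra_general p hp K ε' hε'
end
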